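/- Let L be a positive integer and define D_L(z) = (2L+1)^{−1} ∑_{n=0}^{L} C(2L+1, 2n) z^{n−L} for z ∈ ℂ \ {0}. Then for every ω ∈ ℝ one has e^{−iωL} · D_L(e^{−iω}) = e^{−iω/2 + i α_L(ω)} · D_L(e^{iω}), where α_L is the phase function defined below (equivalently, since D_L does not vanish on the unit circle, e^{−iωL} D_L(e^{−iω}) / D_L(e^{iω}) = e^{−iω/2 + i α_L(ω)}). -/

import Mathlib

/-!
Binomial expansion gives `2(2L+1) w^{2L} D_L(w²) = (1 + w)^{2L+1} + (1 - w)^{2L+1}`.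
On the unit circle, `1 ± e^{2iθ}` equal `2 cos θ · e^{iθ}` and `-2i sin θ · e^{iθ}`, so
`D_L(e^{iω})` is a positive constant times a unimodular factor times
`P = cos^{2L+1}(ω/4) - i (-1)^L sin^{2L+1}(ω/4)`; changing `ω` to `-ω` conjugates `P`.
For `x ≠ 0` the quotient `(x + iy)/(x - iy)` is `e^{2i arctan(y/x)}`, which here is `e^{iα_L(ω)}`;
where `cos(ω/4) = 0` the quotient is `-1 = e^{±iπ}`.
-/

open Complex
open scoped Classical

/-- The Thiran common factor `D_L` (closed binomial form). -/
noncomputable def DL (L : ℕ) (z : ℂ) : ℂ :=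
  (1 / (2 * (L : ℂ) + 1)) *
    ∑ n ∈ Finset.range (L + 1), (Nat.choose (2 * L + 1) (2 * n) : ℂ) * z ^ ((n : ℤ) - (L : ℤ))

/-- The phase function `α_L`, with the convention `arctan(±∞) = ±π/2` at the
points `ω ∈ 2π + 4πℤ`. -/
noncomputable def alphaL (L : ℕ) (ω : ℝ) : ℝ :=
  if ∃ k : ℤ, ω = 2 * Real.pi + 4 * Real.pi * k then (-1 : ℝ) ^ L * Real.pi
  else 2 * (-1 : ℝ) ^ L * Real.arctan (Real.tan (ω / 4) ^ (2 * L + 1))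

theorem Finset.sum_range_two_mul {M : Type*} [AddCommMonoid M] (f : ℕ → M) (m : ℕ) :
    ∑ k ∈ Finset.range (2 * m), f k =
      ∑ n ∈ Finset.range m, (f (2 * n) + f (2 * n + 1)) := by
  induction m with
  | zero => simp
  | succ m ih =>
    rw [Nat.mul_succ, Finset.sum_range_succ, Finset.sum_range_succ, ih, Finset.sum_range_succ,
      add_assoc]

theorem one_add_pow_add_one_sub_pow {R : Type*} [CommRing R] (w : R) (m : ℕ) :
    (1 + w) ^ (2 * m + 1) + (1 - w) ^ (2 * m + 1) =
      2 * ∑ n ∈ Finset.range (m + 1), ((2 * m + 1).choose (2 * n) : R) * w ^ (2 * n) := by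
  rw [add_comm 1 w, sub_eq_neg_add, add_pow, add_pow, ← Finset.sum_add_distrib,
    show 2 * m + 1 + 1 = 2 * (m + 1) by ring, Finset.sum_range_two_mul, Finset.mul_sum]
  refine Finset.sum_congr rfl fun n _ => ?_
  rw [Even.neg_pow ⟨n, two_mul n⟩, Odd.neg_pow ⟨n, rfl⟩]
  ring

theorem DL_sq (L : ℕ) {w : ℂ} (hw : w ≠ 0) :
    DL L (w ^ 2) =
      ((1 + w) ^ (2 * L + 1) + (1 - w) ^ (2 * L + 1)) / (2 * (2 * L + 1) * w ^ (2 * L)) := by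
  have hpow (n : ℕ) : (w ^ 2) ^ ((n : ℤ) - L) = w ^ (2 * n) / w ^ (2 * L) := by
    rw [zpow_sub₀ (pow_ne_zero 2 hw), zpow_natCast, zpow_natCast, ← pow_mul, ← pow_mul,
      mul_comm 2 n, mul_comm 2 L]
  simp only [DL, hpow, one_add_pow_add_one_sub_pow, mul_div, ← Finset.sum_div]
  field_simp

theorem Complex.exp_neg_mul_I_mul_exp_mul_I (θ : ℂ) : exp (-θ * I) * exp (θ * I) = 1 := by
  rw [← exp_add, neg_mul, neg_add_cancel, exp_zero]

theorem Complex.exp_mul_I_sq (θ : ℂ) : exp (θ * I) ^ 2 = exp (2 * θ * I) := by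
  rw [← exp_nat_mul]; push_cast; ring_nf

theorem Complex.one_add_exp_two_mul_I (θ : ℂ) :
    1 + exp (2 * θ * I) = 2 * cos θ * exp (θ * I) := by
  linear_combination (-exp (θ * I)) * two_cos θ - exp_neg_mul_I_mul_exp_mul_I θ -
    exp_mul_I_sq θ

theorem Complex.one_sub_exp_two_mul_I (θ : ℂ) :
    1 - exp (2 * θ * I) = -2 * sin θ * I * exp (θ * I) := by
  linear_combination (exp (θ * I) * I) * two_sin θ - exp_neg_mul_I_mul_exp_mul_I θ +
    exp_mul_I_sq θ + exp (θ * I) * (exp (-θ * I) - exp (θ * I)) * I_sq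

theorem DL_exp_four_mul_I (L : ℕ) (θ : ℂ) :
    DL L (exp (4 * θ * I)) =
      4 ^ L / (2 * L + 1) * exp ((1 - 2 * L) * θ * I) *
        (cos θ ^ (2 * L + 1) - (-1) ^ L * sin θ ^ (2 * L + 1) * I) := by
  have hsq : exp (4 * θ * I) = exp (2 * θ * I) ^ 2 := by
    rw [exp_mul_I_sq (2 * θ)]; ring_nf
  have hI : I ^ (2 * L + 1) = (-1) ^ L * I := by rw [pow_succ, pow_mul, I_sq]
  have h2 : (2 : ℂ) ^ (2 * L + 1) = 2 * 4 ^ L := by rw [pow_succ, pow_mul]; norm_num; ring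
  have hE :
      exp ((1 - 2 * L) * θ * I) * exp (2 * θ * I) ^ (2 * L) = exp (θ * I) ^ (2 * L + 1) := by
    rw [← exp_nat_mul, ← exp_nat_mul, ← exp_add]; push_cast; ring_nf
  have hL : (2 * L + 1 : ℂ) ≠ 0 := by exact_mod_cast (2 * L).succ_ne_zero
  rw [hsq, DL_sq L (exp_ne_zero _), one_add_exp_two_mul_I, one_sub_exp_two_mul_I,
    div_eq_iff (by simp [hL, exp_ne_zero]), mul_pow, mul_pow, mul_pow, mul_pow, mul_pow, hI,
    Odd.neg_pow ⟨L, rfl⟩, h2, ← hE]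
  field_simp
  ring

theorem Complex.exp_two_mul_arctan_mul_I {z : ℂ} (h₁ : 1 + z * I ≠ 0)
    (h₂ : 1 - z * I ≠ 0) :
    exp (2 * (arctan z * I)) = (1 + z * I) / (1 - z * I) := by
  rw [arctan, ← mul_rotate, ← mul_assoc, show 2 * (I * (-I / 2)) = 1 by simp [field], one_mul,
    exp_log (div_ne_zero h₁ h₂)]

theorem Complex.ofReal_add_ofReal_mul_I_eq_exp_mul (x y : ℝ) (hx : x ≠ 0) :
    (x + y * I : ℂ) = exp (2 * (Real.arctan (y / x) * I)) * (x - y * I) := by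
  have h₁ : 1 + ((y / x : ℝ) : ℂ) * I ≠ 0 := fun h => by simpa using congrArg re h
  have h₂ : 1 - ((y / x : ℝ) : ℂ) * I ≠ 0 := fun h => by simpa using congrArg re h
  have hy : (y : ℂ) = (y / x : ℝ) * x := by
    rw [ofReal_div, div_mul_cancel₀ _ (ofReal_ne_zero.mpr hx)]
  rw [hy, ofReal_arctan, exp_two_mul_arctan_mul_I h₁ h₂, div_mul_eq_mul_div, eq_div_iff h₂]
  ring

theorem Real.arctan_neg_one_pow_mul (n : ℕ) (x : ℝ) :
    Real.arctan ((-1) ^ n * x) = (-1) ^ n * Real.arctan x := by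
  rcases neg_one_pow_eq_or ℝ n with h | h <;> simp [h, Real.arctan_neg]

theorem Real.cos_div_four_eq_zero_iff (ω : ℝ) :
    Real.cos (ω / 4) = 0 ↔ ∃ k : ℤ, ω = 2 * Real.pi + 4 * Real.pi * k := by
  rw [Real.cos_eq_zero_iff]
  constructor <;> rintro ⟨k, hk⟩ <;> exact ⟨k, by linarith⟩

theorem Complex.exp_neg_one_pow_mul_pi_mul_I (n : ℕ) :
    exp (((-1 : ℝ) ^ n * Real.pi : ℝ) * I) = -1 := by
  rcases neg_one_pow_eq_or ℝ n with h | h <;> simp [h, exp_pi_mul_I, exp_neg_pi_mul_I]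

theorem cos_pow_add_sin_pow_mul_I_eq_exp_alphaL_mul (L : ℕ) (ω : ℝ) :
    cos (ω / 4 : ℂ) ^ (2 * L + 1) + (-1) ^ L * sin (ω / 4 : ℂ) ^ (2 * L + 1) * I =
      exp (alphaL L ω * I) *
        (cos (ω / 4 : ℂ) ^ (2 * L + 1) - (-1) ^ L * sin (ω / 4 : ℂ) ^ (2 * L + 1) * I) := by
  have hcos : cos (ω / 4 : ℂ) = (Real.cos (ω / 4) : ℂ) := by push_cast; rfl
  have hsin : sin (ω / 4 : ℂ) = (Real.sin (ω / 4) : ℂ) := by push_cast; rfl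
  rw [hcos, hsin, alphaL]
  split_ifs with h
  · rw [← Real.cos_div_four_eq_zero_iff] at h
    rw [h, exp_neg_one_pow_mul_pi_mul_I]
    simp
  · have hc : Real.cos (ω / 4) ≠ 0 := mt (Real.cos_div_four_eq_zero_iff ω).1 h
    have key := ofReal_add_ofReal_mul_I_eq_exp_mul (Real.cos (ω / 4) ^ (2 * L + 1))
      ((-1) ^ L * Real.sin (ω / 4) ^ (2 * L + 1)) (pow_ne_zero _ hc)
    rw [mul_div_assoc, ← div_pow, ← Real.tan_eq_sin_div_cos, Real.arctan_neg_one_pow_mul] at key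
    push_cast at key ⊢
    convert key using 3
    ring

theorem DL_allpass_phase_general (L : ℕ) (ω : ℝ) :
    Complex.exp (-(Complex.I * (ω : ℂ) * (L : ℂ))) *
        DL L (Complex.exp (-(Complex.I * (ω : ℂ)))) =
      Complex.exp (-(Complex.I * (ω : ℂ)) / 2 + Complex.I * (alphaL L ω : ℂ)) *
        DL L (Complex.exp (Complex.I * (ω : ℂ))) := by
  have hplus : DL L (exp (I * ω)) = DL L (exp (4 * (ω / 4 : ℂ) * I)) := by ring_nf
  have hminus : DL L (exp (-(I * ω))) = DL L (exp (4 * (-(ω / 4 : ℂ)) * I)) := by ring_nf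
  have hexp : exp (-(I * ω * L)) * exp ((1 - 2 * L) * (-(ω / 4 : ℂ)) * I) =
      exp (-(I * ω) / 2) * exp ((1 - 2 * L) * (ω / 4 : ℂ) * I) := by
    rw [← exp_add, ← exp_add]; ring_nf
  have hphase := cos_pow_add_sin_pow_mul_I_eq_exp_alphaL_mul L ω
  rw [hplus, hminus, DL_exp_four_mul_I, DL_exp_four_mul_I, cos_neg, sin_neg,
    Odd.neg_pow ⟨L, rfl⟩, exp_add, mul_comm I (alphaL L ω : ℂ)]
  set c : ℂ := 4 ^ L / (2 * L + 1)
  set P := cos (ω / 4 : ℂ) ^ (2 * L + 1) - (-1) ^ L * sin (ω / 4 : ℂ) ^ (2 * L + 1) * I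
  linear_combination c * exp (-(I * ω * L)) * exp ((1 - 2 * L) * (-(ω / 4 : ℂ)) * I) * hphase +
    c * exp (alphaL L ω * I) * P * hexp

/-- Phase of the allpass ratio `e^{-iωL} D_L(e^{-iω}) / D_L(e^{iω})`. -/
theorem DL_allpass_phase (L : ℕ) (hL : 0 < L) (ω : ℝ) :
    Complex.exp (-(Complex.I * (ω : ℂ) * (L : ℂ))) *
        DL L (Complex.exp (-(Complex.I * (ω : ℂ)))) =
      Complex.exp (-(Complex.I * (ω : ℂ)) / 2 + Complex.I * (alphaL L ω : ℂ)) *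
        DL L (Complex.exp (Complex.I * (ω : ℂ))) :=
  DL_allpass_phase_general L ω
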